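/- arXiv:1512.07766 — 2 statements merged into one kernel-verified Lean document; each statement's English description precedes it below -/
import Mathlib

section
/- For the monic Chebyshev polynomials T_n (defined by T_0 = 2, T_1 = t, T_{n+1} = t·T_n − T_{n−1}), if T_n'(t) = 0 at some real t, then T_n(t) = 2 or T_n(t) = −2. -/
open Polynomial Real

/-- The monic Chebyshev polynomials of the first kind:
`T 0 = 2`, `T 1 = X`, `T (n+2) = X * T (n+1) - T n`. -/
noncomputable def T : ℕ → Polynomial ℝ
  | 0 => 2
  | 1 => X
  | n + 2 => X * T (n + 1) - T n

/-- Auxiliary second-kind sequence: `W 0 = 0`, `W 1 = 1`, same recurrence. -/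
noncomputable def W : ℕ → Polynomial ℝ
  | 0 => 0
  | 1 => 1
  | n + 2 => X * W (n + 1) - W n

lemma T_rec (n : ℕ) : T (n + 2) = X * T (n + 1) - T n := rfl
lemma W_rec (n : ℕ) : W (n + 2) = X * W (n + 1) - W n := rfl

/-- Pell identity together with the cross identity, proved jointly. -/
lemma pell_aux (n : ℕ) :
    T n ^ 2 - (X ^ 2 - 4) * W n ^ 2 = 4 ∧
    T (n + 1) ^ 2 - (X ^ 2 - 4) * W (n + 1) ^ 2 = 4 ∧
    T n * T (n + 1) - (X ^ 2 - 4) * (W n * W (n + 1)) = 2 * X := by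
  induction n with
  | zero =>
    refine ⟨?_, ?_, ?_⟩ <;> simp [T, W] <;> ring
  | succ n ih =>
    obtain ⟨hQ, hQ', hC⟩ := ih
    refine ⟨hQ', ?_, ?_⟩
    · rw [T_rec, W_rec]
      linear_combination (X ^ 2 : Polynomial ℝ) * hQ' + hQ - 2 * X * hC
    · rw [T_rec, W_rec]
      linear_combination (X : Polynomial ℝ) * hQ' - hC

lemma pell (n : ℕ) : T n ^ 2 - (X ^ 2 - 4) * W n ^ 2 = 4 := (pell_aux n).1

/-- `T (n+1) = X * W (n+1) - 2 * W n`. -/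
lemma T_eq_W (n : ℕ) : T (n + 1) = X * W (n + 1) - 2 * W n := by
  induction n using Nat.twoStepInduction with
  | zero => simp [T, W]
  | one => simp [T, W]
  | more n ih1 ih2 =>
    have hw : W (n + 1 + 1) = X * W (n + 1) - W n := rfl
    rw [T_rec, W_rec]
    linear_combination (X : Polynomial ℝ) * ih2 - ih1 + 2 * hw

lemma deriv_aux (n : ℕ) :
    derivative (T n) = (n : Polynomial ℝ) * W n ∧
    derivative (T (n + 1)) = ((n : Polynomial ℝ) + 1) * W (n + 1) := by
  induction n with
  | zero =>
    constructor <;> simp [T, W]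
  | succ n ih =>
    obtain ⟨h1, h2⟩ := ih
    refine ⟨by push_cast; exact h2, ?_⟩
    rw [T_rec, W_rec]
    have hK := T_eq_W n
    push_cast
    rw [derivative_sub, derivative_mul, derivative_X, h1, h2]
    linear_combination hK

lemma T_deriv (n : ℕ) : derivative (T n) = (n : Polynomial ℝ) * W n := (deriv_aux n).1

theorem chebyshev_deriv_zero_implies_value (n : ℕ) (t : ℝ)
    (h : ((T n).derivative).eval t = 0) :
    (T n).eval t = 2 ∨ (T n).eval t = -2 := by
  cases n with
  | zero => left; simp [T]
  | succ n =>
    rw [T_deriv] at h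
    simp only [eval_mul, eval_natCast] at h
    have hn : ((n : ℝ) + 1) ≠ 0 := by positivity
    have hW : (W (n + 1)).eval t = 0 := by
      have := h
      push_cast at this
      rcases mul_eq_zero.1 this with h' | h'
      · exact absurd h' hn
      · exact h'
    have hp := congrArg (eval t) (pell (n + 1))
    simp only [eval_sub, eval_mul, eval_pow, eval_X, eval_ofNat, hW] at hp
    have : ((T (n + 1)).eval t - 2) * ((T (n + 1)).eval t + 2) = 0 := by nlinarith
    rcases mul_eq_zero.1 this with h' | h'
    · left; linarith
    · right; linarith
end

section
/- For every n ≥ 1, the following factorization holds in ℝ[s,t]: (T_n(t) − T_n(s))/(t − s) = ∏_{k=1}^{⌊n/2⌋} E_{2kπ/n}(s,t), where E_μ(x,y) = x² + y² − 2cos(μ)·x·y − 4sin²(μ) for μ not a multiple of π, and E_π(x,y) = x + y. Equivalently, T_n(t) − T_n(s) = (t − s)·∏_{k=1}^{⌊n/2⌋} E_{2kπ/n}(s,t). -/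
open Polynomial Real

/-- The Lissajous ellipse polynomial: `E μ x y = x² + y² − 2 cos μ · x y − 4 sin² μ`
for `μ ≢ 0 mod π`, with the degenerate cases `E 0 = x − y` and `E π = x + y`. -/
noncomputable def E (μ x y : ℝ) : ℝ :=
  if μ = 0 then x - y
  else if μ = Real.pi then x + y
  else x ^ 2 + y ^ 2 - 2 * Real.cos μ * x * y - 4 * Real.sin μ ^ 2

/-! Over `ℂ` write `s = w + w⁻¹` and `t = z + z⁻¹`. Then `Tₙ(t) − Tₙ(s) = z⁻ⁿ (zⁿ − wⁿ)(zⁿ − w⁻ⁿ)`,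
and splitting both differences of `n`-th powers over the roots of unity `ζᵏ`, `ζ = e^{2πi/n}`, gives
`Tₙ(t) − Tₙ(s) = ∏_{k<n} (t − (ζᵏw + (ζᵏw)⁻¹))`. The factor `k = 0` is `t − s`; for `0 < k < n/2`
the factors `k` and `n − k` multiply to the real quadratic `E_{2kπ/n}(s, t)`, and for `k = n/2`
the factor is `t + s`. -/

open Finset

theorem prod_range_eq_mul_prod_Icc_pairs {M : Type*} [CommMonoid M] (f : ℕ → M) {n : ℕ}
    (hn : 0 < n) :
    ∏ k ∈ range n, f k =
      f 0 * ∏ k ∈ Icc 1 (n / 2), if 2 * k = n then f k else f k * f (n - k) := by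
  have hsplit : Icc 1 (n / 2) ∪ Ioo (n / 2) n = Ico 1 n := by
    ext k; simp only [mem_union, mem_Icc, mem_Ioo, mem_Ico]; omega
  have hdisj : Disjoint (Icc 1 (n / 2)) (Ioo (n / 2) n) := by
    rw [disjoint_left]; intro k; simp only [mem_Icc, mem_Ioo]; omega
  have hreflect : ∏ k ∈ Icc 1 (n / 2) with 2 * k ≠ n, f (n - k) = ∏ j ∈ Ioo (n / 2) n, f j :=
    prod_nbij' (n - ·) (n - ·) (by intro k; simp only [mem_filter, mem_Icc, mem_Ioo]; omega)
      (by intro k; simp only [mem_filter, mem_Icc, mem_Ioo]; omega)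
      (by intro k; simp only [mem_filter, mem_Icc]; omega)
      (by intro k; simp only [mem_Ioo]; omega) (fun _ _ => rfl)
  have hpair : ∀ k, (if 2 * k = n then f k else f k * f (n - k)) =
      f k * if 2 * k ≠ n then f (n - k) else 1 := by
    intro k; split_ifs <;> simp_all
  rw [range_eq_Ico, prod_eq_prod_Ico_succ_bot hn, ← hsplit, prod_union hdisj, ← hreflect,
    prod_filter, prod_congr rfl fun k _ => hpair k, prod_mul_distrib]

section Field

variable {K : Type*} [Field K]

theorem IsPrimitiveRoot.pow_sub_pow_eq_prod_range {n : ℕ} {ζ : K} (hζ : IsPrimitiveRoot ζ n)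
    (hn : 0 < n) (z c : K) : z ^ n - c ^ n = ∏ k ∈ range n, (z - ζ ^ k * c) := by
  simpa [eval_prod] using congrArg (eval z) (X_pow_sub_C_eq_prod hζ hn (rfl : c ^ n = c ^ n))

theorem exists_add_inv_eq [IsAlgClosed K] (t : K) : ∃ z : K, z ≠ 0 ∧ z + z⁻¹ = t := by
  have hdeg : (X ^ 2 - C t * X + 1 : K[X]).degree = 2 := by compute_degree!
  obtain ⟨z, hz⟩ := IsAlgClosed.exists_root _ (hdeg ▸ two_ne_zero)
  have hz : z ^ 2 - t * z + 1 = 0 := by simpa using hz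
  have hz0 : z ≠ 0 := by rintro rfl; simp at hz
  refine ⟨z, hz0, ?_⟩
  field_simp
  linear_combination hz

theorem chebyshev_C_eval_add_inv {z : K} (hz : z ≠ 0) (n : ℕ) :
    (Chebyshev.C K n).eval (z + z⁻¹) = z ^ n + z⁻¹ ^ n := by
  rw [← dickson_one_one_eq_chebyshev_C]
  exact dickson_one_one_eval_add_inv z z⁻¹ (mul_inv_cancel₀ hz) n

theorem chebyshev_C_eval_sub_eval_add_inv_eq_prod [IsAlgClosed K] {n : ℕ} {ζ : K}
    (hζ : IsPrimitiveRoot ζ n) (hn : 0 < n) (t : K) {w : K} (hw : w ≠ 0) :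
    (Chebyshev.C K n).eval t - (Chebyshev.C K n).eval (w + w⁻¹) =
      ∏ k ∈ range n, (t - (ζ ^ k * w + (ζ ^ k * w)⁻¹)) := by
  obtain ⟨z, hz, rfl⟩ := exists_add_inv_eq t
  have hζ0 : ζ ≠ 0 := hζ.ne_zero hn.ne'
  have factor : ∀ k : ℕ, z + z⁻¹ - (ζ ^ k * w + (ζ ^ k * w)⁻¹) =
      z⁻¹ * ((z - ζ ^ k * w) * (z - ζ⁻¹ ^ k * w⁻¹)) := by
    intro k; rw [inv_pow]; field_simp; ring
  rw [prod_congr rfl fun k _ => factor k, prod_mul_distrib, prod_mul_distrib, prod_const,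
    card_range, ← hζ.pow_sub_pow_eq_prod_range hn, ← hζ.inv.pow_sub_pow_eq_prod_range hn,
    chebyshev_C_eval_add_inv hz, chebyshev_C_eval_add_inv hw]
  simp only [inv_pow]
  field_simp
  ring

theorem sub_add_inv_mul_sub_add_inv {u w : K} (hu : u ≠ 0) (hw : w ≠ 0) (t : K) :
    (t - (u * w + (u * w)⁻¹)) * (t - (u⁻¹ * w + (u⁻¹ * w)⁻¹)) =
      (w + w⁻¹) ^ 2 + t ^ 2 - (u + u⁻¹) * (w + w⁻¹) * t - (4 - (u + u⁻¹) ^ 2) := by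
  field_simp
  ring

end Field

lemma T_eq_chebyshev_C : ∀ n : ℕ, T n = Chebyshev.C ℝ n
  | 0 => by simp [T]
  | 1 => by simp [T]
  | n + 2 => by
    rw [T, T_eq_chebyshev_C (n + 1), T_eq_chebyshev_C n]
    exact_mod_cast (Chebyshev.C_add_two ℝ n).symm

lemma E_pi (x y : ℝ) : E π x y = x + y := by
  rw [E, if_neg pi_ne_zero, if_pos rfl]

lemma ofReal_E_of_ne {μ : ℝ} (h0 : μ ≠ 0) (hπ : μ ≠ π) (x y : ℝ) :
    let c := Complex.exp (μ * Complex.I) + (Complex.exp (μ * Complex.I))⁻¹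
    (E μ x y : ℂ) = x ^ 2 + y ^ 2 - c * x * y - (4 - c ^ 2) := by
  rw [← Complex.exp_neg, ← neg_mul, ← Complex.two_cos, E, if_neg h0, if_neg hπ]
  push_cast
  rw [Complex.sin_sq]
  ring

lemma two_mul_mul_pi_div_eq_pi_iff {n k : ℕ} (hn : n ≠ 0) : 2 * k * π / n = π ↔ 2 * k = n := by
  rw [div_eq_iff (by exact_mod_cast hn), mul_comm π, mul_left_inj' pi_ne_zero]
  exact_mod_cast Iff.rfl

lemma exp_two_pi_mul_I_div_pow (n k : ℕ) :
    Complex.exp (2 * π * Complex.I / n) ^ k = Complex.exp ((2 * k * π / n : ℝ) * Complex.I) := by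
  rw [← Complex.exp_nat_mul]
  push_cast
  ring_nf

theorem chebyshev_diff_factorization (n : ℕ) (hn : 1 ≤ n) (s t : ℝ) :
    (T n).eval t - (T n).eval s =
      (t - s) * ∏ k ∈ Finset.Icc 1 (n / 2), E (2 * (k : ℝ) * Real.pi / n) s t := by
  obtain ⟨w, hw, hws⟩ := exists_add_inv_eq (s : ℂ)
  set ζ := Complex.exp (2 * π * Complex.I / n)
  have hζ : IsPrimitiveRoot ζ n := Complex.isPrimitiveRoot_exp n (by omega)
  apply Complex.ofReal_injective
  push_cast
  rw [T_eq_chebyshev_C, Chebyshev.complex_ofReal_eval_C, Chebyshev.complex_ofReal_eval_C, ← hws,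
    chebyshev_C_eval_sub_eval_add_inv_eq_prod hζ hn _ hw, prod_range_eq_mul_prod_Icc_pairs _ hn]
  congr 1
  · simp [hws]
  refine prod_congr rfl fun k hk => ?_
  obtain ⟨hk1, hk2⟩ := mem_Icc.mp hk
  have hζk := exp_two_pi_mul_I_div_pow n k
  split_ifs with hkn
  · rw [(two_mul_mul_pi_div_eq_pi_iff (by omega)).mpr hkn] at hζk ⊢
    rw [hζk, Complex.exp_pi_mul_I, E_pi, Complex.ofReal_add, ← hws, neg_one_mul, inv_neg]
    ring
  · have hζnk : ζ ^ (n - k) = (ζ ^ k)⁻¹ :=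
      eq_inv_of_mul_eq_one_left (by rw [← pow_add, Nat.sub_add_cancel (by omega), hζ.pow_eq_one])
    have hμ0 : 2 * (k : ℝ) * π / n ≠ 0 := by positivity
    rw [hζnk, hζk, sub_add_inv_mul_sub_add_inv (Complex.exp_ne_zero _) hw, hws,
      ofReal_E_of_ne hμ0 (mt (two_mul_mul_pi_div_eq_pi_iff (by omega)).mp hkn)]
end
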